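/- Let J, K ⊆ I and u, v ∈ Hom(−, a) such that the left cosets u W_J(C) and v W_K(C) have non-empty intersection. Then u W_J(C) ∩ v W_K(C) = w W_{J∩K}(C) for some w ∈ Hom(−, a). In particular if J ⊆ K then this intersection equals u W_J(C), and if J = K then u W_J(C) = v W_J(C). -/

import Mathlib

set_option linter.unusedSectionVars false

/-- A Cartan scheme `C = C(I, A, (ρ_i), (C^a))`. -/
structure CartanScheme (I A : Type) [Fintype I] [DecidableEq I] [Fintype A] [Nonempty A] where
  ρ : I → A → A
  c : A → I → I → ℤ
  ρ_invol : ∀ i a, ρ i (ρ i a) = a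
  c_diag : ∀ a i, c a i i = 2
  c_offdiag_nonpos : ∀ a i j, i ≠ j → c a i j ≤ 0
  c_zero_symm : ∀ a i j, c a i j = 0 → c a j i = 0
  c_rho : ∀ a i j, c (ρ i a) i j = c a i j

namespace CartanScheme

variable {I A : Type} [Fintype I] [DecidableEq I] [Fintype A] [Nonempty A] [DecidableEq A]
variable (C : CartanScheme I A)

/-- The simple reflection `σ_i^a` as a map `ℤ^I → ℤ^I`, `σ_i^a(α_j) = α_j - c^a_{ij} α_i`. -/
def sigma (a : A) (i : I) : (I → ℤ) → (I → ℤ) :=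
  fun v k => v k - (if k = i then ∑ j, C.c a i j * v j else 0)

/-- Target object of the word `[i_1, …, i_k]` read at source object `a`:
`ρ_{i_1} ⋯ ρ_{i_k}(a)`. -/
def wordTarget (a : A) : List I → A
  | [] => a
  | i :: l => C.ρ i (wordTarget a l)

/-- The map `σ_{i_1} ⋯ σ_{i_k}^a : ℤ^I → ℤ^I` determined by a word with source `a`. -/
def wordMap (a : A) : List I → ((I → ℤ) → (I → ℤ))
  | [] => id
  | i :: l => C.sigma (C.wordTarget a l) i ∘ wordMap a l

theorem wordTarget_append (a : A) (l₁ l₂ : List I) :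
    C.wordTarget a (l₁ ++ l₂) = C.wordTarget (C.wordTarget a l₂) l₁ := by
  induction l₁ with
  | nil => rfl
  | cons i l ih => simp [wordTarget, ih]

theorem wordMap_append (a : A) (l₁ l₂ : List I) :
    C.wordMap a (l₁ ++ l₂) = C.wordMap (C.wordTarget a l₂) l₁ ∘ C.wordMap a l₂ := by
  induction l₁ with
  | nil => rfl
  | cons i l ih => simp [wordMap, ih, wordTarget_append, Function.comp_assoc]

/-- A morphism of the Weyl groupoid `W(C)`: a source object, a target object, and a map
`ℤ^I → ℤ^I` which is a composition of simple reflections along some word. -/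
@[ext]
structure Mor where
  src : A
  tgt : A
  toFun : (I → ℤ) → (I → ℤ)
  spec : ∃ l : List I, C.wordTarget src l = tgt ∧ C.wordMap src l = toFun

variable {C}

/-- A word realizes a morphism. -/
def Realizes (w : Mor C) (l : List I) : Prop :=
  C.wordTarget w.src l = w.tgt ∧ C.wordMap w.src l = w.toFun

variable (C)

/-- The identity morphism `id^a`. -/
def idMor (a : A) : Mor C := ⟨a, a, id, ⟨[], rfl, rfl⟩⟩

/-- The generator `σ_i^a ∈ Hom(a, ρ_i(a))`. -/
def genMor (i : I) (a : A) : Mor C :=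
  ⟨a, C.ρ i a, C.sigma a i, ⟨[i], rfl, Function.comp_id _⟩⟩

/-- The simple reflection with target `a`, i.e. `id^a σ_i = σ_i^{ρ_i(a)} ∈ Hom(ρ_i(a), a)`. -/
def sgen (a : A) (i : I) : Mor C :=
  { src := C.ρ i a, tgt := a, toFun := C.sigma (C.ρ i a) i,
    spec := ⟨[i], by simp [wordTarget, C.ρ_invol], Function.comp_id _⟩ }

variable {C}

/-- Composition `u ∘ v` (with `v` applied first); junk value `u` if not composable. -/
def Mor.comp (u v : Mor C) : Mor C :=
  if h : v.tgt = u.src then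
    { src := v.src, tgt := u.tgt, toFun := u.toFun ∘ v.toFun,
      spec := by
        obtain ⟨lu, hu1, hu2⟩ := u.spec
        obtain ⟨lv, hv1, hv2⟩ := v.spec
        refine ⟨lu ++ lv, ?_, ?_⟩
        · rw [C.wordTarget_append, hv1, h, hu1]
        · rw [C.wordMap_append, hv1, h, hu2, hv2] }
  else u

/-- Length of a morphism: minimal length of a realizing word. -/
noncomputable def len (w : Mor C) : ℕ := sInf {k | ∃ l : List I, Realizes w l ∧ l.length = k}

/-- A reduced decomposition. -/
def IsReduced (w : Mor C) (l : List I) : Prop := Realizes w l ∧ l.length = len w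

/-- The (right) weak order: `u ≤_R uv` iff `ℓ(uv) = ℓ(u) + ℓ(v)`. -/
def weakLe (u w : Mor C) : Prop :=
  ∃ v : Mor C, v.tgt = u.src ∧ w = u.comp v ∧ len w = len u + len v

/-- Membership in the parabolic subgroupoid `W_J(C)`. -/
def InParabolic (J : Set I) (w : Mor C) : Prop :=
  ∃ l : List I, (∀ i ∈ l, i ∈ J) ∧ Realizes w l

/-- Length with respect to the generators `σ_j`, `j ∈ J`. -/
noncomputable def lenPar (J : Set I) (w : Mor C) : ℕ :=
  sInf {k | ∃ l : List I, (∀ i ∈ l, i ∈ J) ∧ Realizes w l ∧ l.length = k}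

/-- The set of letters occurring in some reduced decomposition of `w`;
by the theorem on reduced decompositions this is the set `J(w)`. -/
def Jset (w : Mor C) : Set I := {i | ∃ l : List I, IsReduced w l ∧ i ∈ l}

variable (C)

/-- The set of real roots at the object `a`. -/
def roots (a : A) : Set (I → ℤ) :=
  {α | ∃ (b : A) (l : List I) (j : I),
    C.wordTarget b l = a ∧ α = C.wordMap b l (Pi.single j 1)}

/-- The set of positive (real) roots at `a`. -/
def posRoots (a : A) : Set (I → ℤ) := {α ∈ C.roots a | ∀ i, 0 ≤ α i}

/-- `R^re(C)` is a finite root system of type `C`: axioms (R1), (R2), (R4) and finiteness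
((R3) holds automatically for real roots). -/
def IsFRS : Prop :=
  (∀ a : A, (C.roots a).Finite) ∧
  (∀ (a : A) (α : I → ℤ), α ∈ C.roots a → (∀ i, 0 ≤ α i) ∨ (∀ i, α i ≤ 0)) ∧
  (∀ (a : A) (i : I) (α : I → ℤ), α ∈ C.roots a → (∃ z : ℤ, α = z • Pi.single i 1) →
    α = Pi.single i 1 ∨ α = -Pi.single i 1) ∧
  (∀ (a : A) (i j : I), i ≠ j →
    (fun x => C.ρ i (C.ρ j x))^[(C.roots a ∩
      {α | ∃ m n : ℕ, α = (m : ℤ) • Pi.single i 1 + (n : ℤ) • Pi.single j 1}).ncard] a = a)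

variable {C}

/-- `I_L(w)`: the set of simple reflections with target `w.tgt` below `w` in weak order. -/
def IL (w : Mor C) : Set I := {i | weakLe (sgen C w.tgt i) w}

/-- `m` is the longest element of `Hom(-,a) ∩ W_J(C)`, i.e. `w_J` at the object `a`. -/
def IsLongestPar (a : A) (J : Set I) (m : Mor C) : Prop :=
  m.tgt = a ∧ InParabolic J m ∧
    ∀ x : Mor C, x.tgt = a → InParabolic J x → weakLe x m

/-- `m` is the longest element `w_I` of `Hom(-,a)`. -/
def IsLongestAt (a : A) (m : Mor C) : Prop :=
  m.tgt = a ∧ ∀ x : Mor C, x.tgt = a → weakLe x m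

/-- `z` is the meet of `x` and `y` in `(Hom(-,a), ≤_R)`. -/
def IsMeet (a : A) (x y z : Mor C) : Prop :=
  z.tgt = a ∧ weakLe z x ∧ weakLe z y ∧
    ∀ t : Mor C, t.tgt = a → weakLe t x → weakLe t y → weakLe t z

/-- `z` is the join of `x` and `y` in `(Hom(-,a), ≤_R)`. -/
def IsJoin (a : A) (x y z : Mor C) : Prop :=
  z.tgt = a ∧ weakLe x z ∧ weakLe y z ∧
    ∀ t : Mor C, t.tgt = a → weakLe x t → weakLe y t → weakLe z t

/-- The left coset `u W_J(C) ⊆ Hom(-, u.tgt)`. -/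
def leftCoset (u : Mor C) (J : Set I) : Set (Mor C) :=
  {x | ∃ v : Mor C, InParabolic J v ∧ v.tgt = u.src ∧ x = u.comp v}

end CartanScheme

/-!
Two cosets meeting in `z` are `z W_J(C)` and `z W_K(C)`, so everything reduces to
`W_J(C) ∩ W_K(C) = W_{J ∩ K}(C)`. For `p` in both, induct on the number `invN p` of positive roots
that `p` sends to negative ones: if `p(α_i) < 0` then `i ∈ J ∩ K`, because an element of `W_J(C)`
does not change the coordinates outside `J`, and `p σ_i` has one inversion fewer.

The base case, that a morphism without inversions is an identity, follows from the existence of a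
word of length `invN w` for every `w`, which in turn follows from the exchange property. That is
proved by the classical argument: if `j ≠ k` are both left descents of `y`, a word of `y` of length
`invN y` can be made to start with `σ_j σ_k σ_j ⋯` (`m_{jk}` letters), and the braid relation turns
this prefix into `σ_k σ_j σ_k ⋯`.
The braid relation itself comes from axiom (R4), which makes both alternating products start at the
same object; in rank two, a morphism is determined by its ends, its inversion set and the parity
of its length.
-/

namespace CartanScheme

variable {I A : Type} [Fintype I] [DecidableEq I] [Fintype A] [Nonempty A] [DecidableEq A]
variable {C : CartanScheme I A}

section IntegerVectors

lemma one_le_sum_of_nonneg {v : I → ℤ} (hv : 0 ≤ v) (hne : v ≠ 0) : 1 ≤ ∑ m, v m := by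
  obtain ⟨m, hm⟩ := Function.ne_iff.1 hne
  have h1 : v m ≤ ∑ m, v m := Finset.single_le_sum (fun m _ => hv m) (Finset.mem_univ m)
  have h2 : (0 : ℤ) < v m := lt_of_le_of_ne (hv m) (Ne.symm hm)
  omega

lemma apply_eq_sum_single (g : (I → ℤ) →+ (I → ℤ)) (v : I → ℤ) :
    g v = ∑ k, v k • g (Pi.single k 1) := by
  conv_lhs => rw [← Finset.univ_sum_single v]
  rw [map_sum]
  refine Finset.sum_congr rfl fun k _ => ?_
  rw [← map_zsmul, ← Pi.single_smul', smul_eq_mul, mul_one]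

lemma eq_self_of_apply_single (g : (I → ℤ) →+ (I → ℤ))
    (h : ∀ k, g (Pi.single k 1) = Pi.single k 1) (v : I → ℤ) : g v = v := by
  rw [apply_eq_sum_single]
  conv_rhs => rw [← Finset.univ_sum_single v]
  refine Finset.sum_congr rfl fun k _ => ?_
  rw [h, ← Pi.single_smul', smul_eq_mul, mul_one]

lemma exists_eq_single_of_sum_mul_eq_one {v S : I → ℤ} (hv : 0 ≤ v) (hv₀ : v ≠ 0)
    (hS : ∀ l, 1 ≤ S l) (hsum : ∑ l, v l * S l = 1) : ∃ l, v = Pi.single l 1 := by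
  obtain ⟨l, hl⟩ := Function.ne_iff.1 hv₀
  have hterm : ∀ m ∈ Finset.univ, 0 ≤ v m * S m := fun m _ =>
    mul_nonneg (hv m) (zero_le_one.trans (hS m))
  have hsplit := Finset.add_sum_erase Finset.univ (fun m => v m * S m) (Finset.mem_univ l)
  have hrest : 0 ≤ ∑ m ∈ Finset.univ.erase l, v m * S m :=
    Finset.sum_nonneg fun m hm => hterm m (Finset.mem_of_mem_erase hm)
  have hvl : 1 ≤ v l * S l :=
    one_le_mul_of_one_le_of_one_le (lt_of_le_of_ne (hv l) (Ne.symm hl)) (hS l)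
  have hvS : v l * S l = 1 := by omega
  have hzero : ∀ m ∈ Finset.univ.erase l, v m * S m = 0 :=
    (Finset.sum_eq_zero_iff_of_nonneg fun m hm => hterm m (Finset.mem_of_mem_erase hm)).1
      (by omega)
  refine ⟨l, funext fun m => ?_⟩
  by_cases hm : m = l
  · subst hm
    simpa using Int.eq_one_of_mul_eq_one_right (hv m) hvS
  · have := hzero m (Finset.mem_erase.2 ⟨hm, Finset.mem_univ m⟩)
    simp [hm, (mul_eq_zero.1 this).resolve_right (by linarith [hS m])]

lemma exists_eq_single_of_nonneg {f g : (I → ℤ) →+ (I → ℤ)} (hgf : ∀ v, g (f v) = v)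
    (hfg : ∀ v, f (g v) = v) (hf : ∀ k, 0 ≤ f (Pi.single k 1)) (hg : ∀ k, 0 ≤ g (Pi.single k 1))
    (k : I) : ∃ l, f (Pi.single k 1) = Pi.single l 1 := by
  have hne : ∀ (h : (I → ℤ) →+ (I → ℤ)) (h' : (I → ℤ) →+ (I → ℤ)), (∀ v, h' (h v) = v) →
      ∀ l, h (Pi.single l 1) ≠ 0 := fun h h' hinv l h0 => by
    have := hinv (Pi.single l 1)
    rw [h0, map_zero] at this
    simpa using congrFun this l
  refine exists_eq_single_of_sum_mul_eq_one (hf k) (hne f g hgf k)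
    (fun l => one_le_sum_of_nonneg (hg l) (hne g f hfg l)) ?_
  -- the coordinates of `g (f α_k) = α_k` sum to `1`
  have h := congrArg (fun w : I → ℤ => ∑ m, w m) (hgf (Pi.single k 1))
  simp only [apply_eq_sum_single g (f _), Finset.sum_apply, Pi.smul_apply, smul_eq_mul] at h
  rw [Finset.sum_comm] at h
  simpa [Finset.mul_sum] using h

end IntegerVectors

section Reflections

lemma sigma_eq (a : A) (i : I) (v : I → ℤ) :
    C.sigma a i v = v - (∑ j, C.c a i j * v j) • Pi.single i 1 := by
  ext k
  by_cases h : k = i <;> simp [sigma, h]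

lemma sigma_apply_of_ne {k i : I} (h : k ≠ i) (a : A) (v : I → ℤ) :
    C.sigma a i v k = v k := by
  simp [sigma, h]

lemma sigma_rho (a : A) (i : I) : C.sigma (C.ρ i a) i = C.sigma a i := by
  funext v k
  simp [sigma, C.c_rho]

lemma sigma_add (a : A) (i : I) (x y : I → ℤ) :
    C.sigma a i (x + y) = C.sigma a i x + C.sigma a i y := by
  simp only [sigma_eq, Pi.add_apply, mul_add, Finset.sum_add_distrib, add_smul]
  abel

lemma sigma_zsmul (a : A) (i : I) (z : ℤ) (x : I → ℤ) :
    C.sigma a i (z • x) = z • C.sigma a i x := by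
  simp only [sigma_eq, Pi.smul_apply, smul_eq_mul, mul_left_comm _ z, ← Finset.mul_sum,
    smul_sub, mul_smul]

lemma sigma_single_self (a : A) (i : I) :
    C.sigma a i (Pi.single i 1) = -Pi.single i 1 := by
  rw [sigma_eq]
  simp [Pi.single_apply, C.c_diag, two_smul]

lemma sigma_sigma (a : A) (i : I) (v : I → ℤ) : C.sigma a i (C.sigma a i v) = v := by
  have hsum : ∑ j, C.c a i j * C.sigma a i v j = -∑ j, C.c a i j * v j := by
    simp [sigma_eq, Pi.single_apply, mul_sub, Finset.sum_sub_distrib, C.c_diag]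
    ring
  rw [sigma_eq (v := C.sigma a i v), hsum, sigma_eq]
  simp

lemma sigma_injective (a : A) (i : I) : Function.Injective (C.sigma a i) :=
  Function.LeftInverse.injective (sigma_sigma a i)

end Reflections

section Words

lemma wordMap_add (a : A) (l : List I) (x y : I → ℤ) :
    C.wordMap a l (x + y) = C.wordMap a l x + C.wordMap a l y := by
  induction l with
  | nil => rfl
  | cons i m ih => simp [wordMap, ih, sigma_add]

lemma wordMap_zsmul (a : A) (l : List I) (z : ℤ) (x : I → ℤ) :
    C.wordMap a l (z • x) = z • C.wordMap a l x := by
  induction l with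
  | nil => rfl
  | cons i m ih => simp only [wordMap, Function.comp_apply, ih, sigma_zsmul]

lemma wordMap_apply_of_notMem {J : Set I} {l : List I} (hl : ∀ i ∈ l, i ∈ J)
    (a : A) (v : I → ℤ) {k : I} (hk : k ∉ J) : C.wordMap a l v k = v k := by
  induction l with
  | nil => rfl
  | cons i m ih =>
    have hki : k ≠ i := fun h => hk (h ▸ hl i List.mem_cons_self)
    simp only [wordMap, Function.comp_apply, sigma_apply_of_ne hki]
    exact ih fun j hj => hl j (List.mem_cons_of_mem i hj)

lemma wordTarget_singleton_rho (a : A) (i : I) : C.wordTarget (C.ρ i a) [i] = a :=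
  C.ρ_invol i a

lemma wordTarget_reverse (a : A) (l : List I) :
    C.wordTarget (C.wordTarget a l) l.reverse = a := by
  induction l with
  | nil => rfl
  | cons i m ih =>
    rw [List.reverse_cons, wordTarget_append]
    show C.wordTarget (C.wordTarget (C.ρ i (C.wordTarget a m)) [i]) m.reverse = a
    rw [wordTarget_singleton_rho, ih]

lemma wordTarget_wordTarget_reverse (a : A) (l : List I) :
    C.wordTarget (C.wordTarget a l.reverse) l = a := by
  simpa using wordTarget_reverse (C := C) a l.reverse

lemma wordMap_reverse_apply (a : A) (l : List I) (v : I → ℤ) :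
    C.wordMap (C.wordTarget a l) l.reverse (C.wordMap a l v) = v := by
  induction l with
  | nil => rfl
  | cons i m ih =>
    rw [List.reverse_cons, wordMap_append]
    show C.wordMap (C.wordTarget (C.ρ i (C.wordTarget a m)) [i]) m.reverse
      (C.sigma (C.ρ i (C.wordTarget a m)) i (C.sigma (C.wordTarget a m) i (C.wordMap a m v))) = v
    rw [wordTarget_singleton_rho, sigma_rho, sigma_sigma, ih]

lemma wordMap_apply_reverse (a : A) (l : List I) (v : I → ℤ) :
    C.wordMap a l (C.wordMap (C.wordTarget a l) l.reverse v) = v := by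
  simpa [wordTarget_reverse] using
    wordMap_reverse_apply (C := C) (C.wordTarget a l) l.reverse v

end Words

section Morphisms

lemma Mor.exists_realizes (w : Mor C) : ∃ l, Realizes w l := w.spec

lemma Mor.eq_of_realizes {w w' : Mor C} {l : List I} (h : Realizes w l) (h' : Realizes w' l)
    (hsrc : w.src = w'.src) : w = w' := by
  ext1
  · exact hsrc
  · rw [← h.1, ← h'.1, hsrc]
  · rw [← h.2, ← h'.2, hsrc]

def Mor.ofWord (b : A) (l : List I) : Mor C :=
  ⟨b, C.wordTarget b l, C.wordMap b l, ⟨l, rfl, rfl⟩⟩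

lemma Mor.realizes_ofWord (b : A) (l : List I) : Realizes (Mor.ofWord (C := C) b l) l :=
  ⟨rfl, rfl⟩

lemma Mor.map_add (w : Mor C) (x y : I → ℤ) : w.toFun (x + y) = w.toFun x + w.toFun y := by
  obtain ⟨l, -, hl⟩ := w.spec
  rw [← hl, wordMap_add]

lemma Mor.map_zsmul (w : Mor C) (z : ℤ) (x : I → ℤ) : w.toFun (z • x) = z • w.toFun x := by
  obtain ⟨l, -, hl⟩ := w.spec
  rw [← hl, wordMap_zsmul]

def Mor.toAddMonoidHom (w : Mor C) : (I → ℤ) →+ (I → ℤ) := AddMonoidHom.mk' w.toFun w.map_add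

@[simp] lemma Mor.toAddMonoidHom_apply (w : Mor C) (x : I → ℤ) :
    w.toAddMonoidHom x = w.toFun x := rfl

lemma Mor.map_neg (w : Mor C) (x : I → ℤ) : w.toFun (-x) = -w.toFun x :=
  _root_.map_neg w.toAddMonoidHom x

noncomputable def Mor.inv (w : Mor C) : Mor C :=
  { src := w.tgt, tgt := w.src,
    toFun := C.wordMap w.tgt w.spec.choose.reverse,
    spec := ⟨w.spec.choose.reverse, by
      have h := wordTarget_reverse (C := C) w.src w.spec.choose
      rwa [w.spec.choose_spec.1] at h, rfl⟩ }

@[simp] lemma Mor.inv_src (w : Mor C) : w.inv.src = w.tgt := rfl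
@[simp] lemma Mor.inv_tgt (w : Mor C) : w.inv.tgt = w.src := rfl

lemma Mor.inv_apply_apply (w : Mor C) (v : I → ℤ) : w.inv.toFun (w.toFun v) = v := by
  have h := wordMap_reverse_apply (C := C) w.src w.spec.choose v
  rwa [w.spec.choose_spec.1, w.spec.choose_spec.2] at h

lemma Mor.realizes_inv {w : Mor C} {l : List I} (h : Realizes w l) :
    Realizes w.inv l.reverse := by
  refine ⟨by rw [Mor.inv_src, Mor.inv_tgt, ← h.1, wordTarget_reverse], ?_⟩
  funext v
  have hright : w.toFun (C.wordMap w.tgt l.reverse v) = v := by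
    rw [← h.1, ← h.2, wordMap_apply_reverse]
  rw [Mor.inv_src, ← hright, Mor.inv_apply_apply, hright]

lemma Mor.apply_inv_apply (w : Mor C) (v : I → ℤ) : w.toFun (w.inv.toFun v) = v := by
  obtain ⟨l, hl⟩ := w.exists_realizes
  rw [← (Mor.realizes_inv hl).2, Mor.inv_src, ← hl.1, ← hl.2, wordMap_apply_reverse]

lemma Mor.toFun_injective (w : Mor C) : Function.Injective w.toFun :=
  Function.LeftInverse.injective w.inv_apply_apply

end Morphisms

section Composition

variable {u v : Mor C}

lemma comp_src (h : v.tgt = u.src) : (u.comp v).src = v.src := by simp [Mor.comp, h]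

lemma comp_tgt (h : v.tgt = u.src) : (u.comp v).tgt = u.tgt := by simp [Mor.comp, h]

lemma comp_toFun (h : v.tgt = u.src) : (u.comp v).toFun = u.toFun ∘ v.toFun := by
  simp [Mor.comp, h]

lemma realizes_comp {lu lv : List I} (h : v.tgt = u.src) (hu : Realizes u lu)
    (hv : Realizes v lv) : Realizes (u.comp v) (lu ++ lv) := by
  refine ⟨?_, ?_⟩
  · rw [comp_src h, wordTarget_append, hv.1, h, hu.1, comp_tgt h]
  · rw [comp_src h, wordMap_append, hv.1, h, hu.2, hv.2, comp_toFun h]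

lemma comp_assoc {x y z : Mor C} (h1 : y.tgt = x.src) (h2 : z.tgt = y.src) :
    (x.comp y).comp z = x.comp (y.comp z) := by
  have h3 : z.tgt = (x.comp y).src := by rw [comp_src h1]; exact h2
  have h4 : (y.comp z).tgt = x.src := by rw [comp_tgt h2]; exact h1
  ext1
  · rw [comp_src h3, comp_src h4, comp_src h2]
  · rw [comp_tgt h3, comp_tgt h4, comp_tgt h1]
  · rw [comp_toFun h3, comp_toFun h4, comp_toFun h1, comp_toFun h2]
    rfl

lemma comp_inv_comp (h : v.tgt = u.tgt) : u.comp (u.inv.comp v) = v := by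
  have h' : v.tgt = u.inv.src := h
  have h'' : (u.inv.comp v).tgt = u.src := by rw [comp_tgt h']; rfl
  ext1
  · rw [comp_src h'', comp_src h']
  · rw [comp_tgt h'', h]
  · rw [comp_toFun h'', comp_toFun h']
    funext x
    exact u.apply_inv_apply _

lemma realizes_genMor (i : I) (a : A) : Realizes (genMor C i a) [i] := ⟨rfl, rfl⟩

lemma realizes_sgen (a : A) (i : I) : Realizes (sgen C a i) [i] :=
  ⟨wordTarget_singleton_rho a i, rfl⟩

lemma sgen_toFun (a : A) (i : I) : (sgen C a i).toFun = C.sigma a i := sigma_rho a i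

lemma exists_eq_genMor_comp {w : Mor C} {j : I} {m : List I} (h : Realizes w (j :: m)) :
    ∃ x : Mor C, Realizes x m ∧ x.src = w.src ∧ w = (genMor C j x.tgt).comp x :=
  ⟨Mor.ofWord w.src m, Mor.realizes_ofWord _ _, rfl, Mor.eq_of_realizes h
    (realizes_comp rfl (realizes_genMor _ _) (Mor.realizes_ofWord _ _)) (by rw [comp_src rfl]; rfl)⟩

end Composition

section Parabolic

variable {J K : Set I} {p q : Mor C}

lemma InParabolic.mono (h : J ⊆ K) : InParabolic J p → InParabolic K p :=
  fun ⟨l, hl, hr⟩ => ⟨l, fun i hi => h (hl i hi), hr⟩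

lemma InParabolic.comp (hc : q.tgt = p.src) (hp : InParabolic J p) (hq : InParabolic J q) :
    InParabolic J (p.comp q) := by
  obtain ⟨lp, hlp, hrp⟩ := hp
  obtain ⟨lq, hlq, hrq⟩ := hq
  refine ⟨lp ++ lq, fun i hi => ?_, realizes_comp hc hrp hrq⟩
  rcases List.mem_append.mp hi with h | h
  exacts [hlp i h, hlq i h]

lemma InParabolic.inv (hp : InParabolic J p) : InParabolic J p.inv := by
  obtain ⟨l, hl, hr⟩ := hp
  exact ⟨l.reverse, fun i hi => hl i (List.mem_reverse.mp hi), Mor.realizes_inv hr⟩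

lemma InParabolic.apply_of_notMem (hp : InParabolic J p) (v : I → ℤ) {k : I} (hk : k ∉ J) :
    p.toFun v k = v k := by
  obtain ⟨l, hl, hr⟩ := hp
  rw [← hr.2, wordMap_apply_of_notMem hl _ _ hk]

end Parabolic

section Roots

lemma single_mem_roots (a : A) (j : I) : (Pi.single j 1 : I → ℤ) ∈ C.roots a :=
  ⟨a, [], j, rfl, rfl⟩

lemma Mor.map_mem_roots (w : Mor C) {α : I → ℤ} (h : α ∈ C.roots w.src) :
    w.toFun α ∈ C.roots w.tgt := by
  obtain ⟨b, l, j, h1, rfl⟩ := h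
  obtain ⟨lw, hw1, hw2⟩ := w.spec
  refine ⟨b, lw ++ l, j, ?_, ?_⟩
  · rw [wordTarget_append, h1, hw1]
  · rw [wordMap_append, h1, hw2]; rfl

lemma ne_zero_of_mem_roots {a : A} {α : I → ℤ} (h : α ∈ C.roots a) : α ≠ 0 := by
  obtain ⟨b, l, j, -, rfl⟩ := h
  intro h0
  have := wordMap_reverse_apply (C := C) b l (Pi.single j 1)
  rw [h0, ← zero_smul ℤ (0 : I → ℤ), wordMap_zsmul, zero_smul] at this
  simpa using congrFun this j

lemma neg_mem_roots {a : A} {α : I → ℤ} (h : α ∈ C.roots a) : -α ∈ C.roots a := by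
  obtain ⟨b, l, j, rfl, rfl⟩ := h
  have hσ := (sgen C b j).map_mem_roots (single_mem_roots _ j)
  rw [sgen_toFun, sigma_single_self] at hσ
  have := (Mor.ofWord (C := C) b l).map_mem_roots hσ
  rwa [Mor.map_neg] at this

lemma not_nonpos_of_nonneg {a : A} {α : I → ℤ} (h : α ∈ C.roots a) (hp : 0 ≤ α) : ¬α ≤ 0 :=
  fun hn => ne_zero_of_mem_roots h (le_antisymm hn hp)

lemma single_nonneg (i : I) : (0 : I → ℤ) ≤ Pi.single i 1 := Pi.single_nonneg.2 zero_le_one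

lemma not_single_nonpos (i : I) : ¬(Pi.single i 1 : I → ℤ) ≤ 0 := fun h => by
  simpa using h i

lemma IsFRS.nonneg_or_nonpos (hC : C.IsFRS) {a : A} {α : I → ℤ} (h : α ∈ C.roots a) :
    0 ≤ α ∨ α ≤ 0 :=
  hC.2.1 a α h

lemma IsFRS.nonneg_of_not_nonpos (hC : C.IsFRS) {a : A} {α : I → ℤ} (h : α ∈ C.roots a)
    (hn : ¬α ≤ 0) : 0 ≤ α :=
  (hC.nonneg_or_nonpos h).resolve_right hn

lemma IsFRS.sigma_nonneg (hC : C.IsFRS) {a : A} {i : I} {α : I → ℤ} (hα : α ∈ C.roots a)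
    (hpos : 0 ≤ α) (hne : α ≠ Pi.single i 1) : 0 ≤ C.sigma a i α := by
  refine hC.nonneg_of_not_nonpos ((genMor C i a).map_mem_roots hα) fun hneg => ?_
  by_cases hsupp : ∀ k, k ≠ i → α k = 0
  · have hsmul : α = α i • Pi.single i 1 := by
      ext k
      by_cases hk : k = i
      · simp [hk]
      · simp [hk, hsupp k hk]
    rcases hC.2.2.1 a i α hα ⟨α i, hsmul⟩ with h | h -- axiom (R2)
    · exact hne h
    · exact not_single_nonpos i (neg_nonneg.mp (h ▸ hpos))
  · push Not at hsupp
    obtain ⟨k, hki, hk0⟩ := hsupp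
    have := hneg k
    rw [Pi.zero_apply, sigma_apply_of_ne hki] at this
    exact hk0 (le_antisymm this (hpos k))

end Roots

section Inversions

def invSet (w : Mor C) : Set (I → ℤ) := {α | α ∈ C.roots w.src ∧ 0 ≤ α ∧ w.toFun α ≤ 0}

noncomputable def invN (w : Mor C) : ℕ := (invSet w).ncard

lemma invSet_finite (hC : C.IsFRS) (w : Mor C) : (invSet w).Finite :=
  (hC.1 w.src).subset fun _ hα => hα.1

lemma invSet_inv (w : Mor C) : invSet w.inv = (fun α => -w.toFun α) '' invSet w := by
  ext β
  constructor
  · rintro ⟨hroot, hpos, hneg⟩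
    refine ⟨-w.inv.toFun β, ⟨neg_mem_roots (w.inv.map_mem_roots hroot), neg_nonneg.2 hneg, ?_⟩, ?_⟩
    · rw [Mor.map_neg, Mor.apply_inv_apply, neg_nonpos]; exact hpos
    · show -w.toFun (-w.inv.toFun β) = β
      rw [Mor.map_neg, Mor.apply_inv_apply, neg_neg]
  · rintro ⟨α, ⟨hroot, hpos, hneg⟩, rfl⟩
    refine ⟨neg_mem_roots (w.map_mem_roots hroot), neg_nonneg.2 hneg, ?_⟩
    rw [Mor.map_neg, Mor.inv_apply_apply, neg_nonpos]; exact hpos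

lemma invN_inv (w : Mor C) : invN w.inv = invN w := by
  rw [invN, invSet_inv,
    Set.ncard_image_of_injective _ fun _ _ h => w.toFun_injective (neg_injective h)]
  rfl

lemma invN_eq_zero_of_realizes_nil {w : Mor C} (h : Realizes w []) : invN w = 0 := by
  have hempty : invSet w = ∅ := Set.eq_empty_of_forall_notMem fun α ⟨hroot, hpos, hneg⟩ =>
    not_nonpos_of_nonneg hroot hpos (by rwa [← h.2] at hneg)
  rw [invN, hempty, Set.ncard_empty]

section RightMul

variable (w : Mor C) (i : I)

lemma comp_sgen_src : (w.comp (sgen C w.src i)).src = C.ρ i w.src := comp_src rfl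

lemma comp_sgen_toFun : (w.comp (sgen C w.src i)).toFun = w.toFun ∘ C.sigma w.src i := by
  rw [comp_toFun rfl, sgen_toFun]

lemma invSet_comp_sgen_diff (hC : C.IsFRS) :
    invSet (w.comp (sgen C w.src i)) \ {Pi.single i 1}
      = C.sigma w.src i '' (invSet w \ {Pi.single i 1}) := by
  have hmaps : ∀ b : A, ∀ β ∈ C.roots (C.ρ i b), 0 ≤ β → β ≠ Pi.single i 1 →
      C.sigma b i β ∈ C.roots b ∧ 0 ≤ C.sigma b i β ∧ C.sigma b i β ≠ Pi.single i 1 := by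
    intro b β hroot hpos hne
    have hroot' := (sgen C b i).map_mem_roots hroot
    rw [sgen_toFun] at hroot'
    refine ⟨hroot', by simpa [sigma_rho] using hC.sigma_nonneg hroot hpos hne, fun h => ?_⟩
    have := congrArg (C.sigma b i) h
    rw [sigma_sigma, sigma_single_self] at this
    exact not_single_nonpos i (neg_nonneg.1 (this ▸ hpos))
  ext β
  simp only [invSet, comp_sgen_src, comp_sgen_toFun, Function.comp_apply, Set.mem_sdiff,
    Set.mem_ofPred_eq, Set.mem_singleton_iff, Set.mem_image]
  constructor
  · rintro ⟨⟨hroot, hpos, hneg⟩, hne⟩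
    obtain ⟨hroot', hpos', hne'⟩ := hmaps w.src β hroot hpos hne
    exact ⟨_, ⟨⟨hroot', hpos', hneg⟩, hne'⟩, sigma_sigma _ _ _⟩
  · rintro ⟨α, ⟨⟨hroot, hpos, hneg⟩, hne⟩, rfl⟩
    rw [← C.ρ_invol i w.src] at hroot
    obtain ⟨hroot', hpos', hne'⟩ := hmaps (C.ρ i w.src) α hroot hpos hne
    rw [sigma_rho] at hroot' hpos' hne'
    exact ⟨⟨hroot', hpos', by rwa [sigma_sigma]⟩, hne'⟩

lemma single_mem_invSet_iff : Pi.single i 1 ∈ invSet w ↔ w.toFun (Pi.single i 1) ≤ 0 :=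
  ⟨fun h => h.2.2, fun h => ⟨single_mem_roots _ i, single_nonneg i, h⟩⟩

lemma single_mem_invSet_comp_sgen_iff :
    Pi.single i 1 ∈ invSet (w.comp (sgen C w.src i)) ↔ 0 ≤ w.toFun (Pi.single i 1) := by
  rw [single_mem_invSet_iff, comp_sgen_toFun, Function.comp_apply, sigma_single_self,
    Mor.map_neg, neg_nonpos]

lemma invN_comp_sgen_of_not_nonpos (hC : C.IsFRS) (h : ¬w.toFun (Pi.single i 1) ≤ 0) :
    invN (w.comp (sgen C w.src i)) = invN w + 1 := by
  have hin : Pi.single i 1 ∈ invSet (w.comp (sgen C w.src i)) :=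
    (single_mem_invSet_comp_sgen_iff w i).2
      (hC.nonneg_of_not_nonpos (w.map_mem_roots (single_mem_roots _ i)) h)
  have hout : Pi.single i 1 ∉ invSet w := mt (single_mem_invSet_iff w i).1 h
  rw [invN, invN, ← Set.ncard_sdiff_singleton_add_one hin (invSet_finite hC _),
    invSet_comp_sgen_diff w i hC, Set.ncard_image_of_injective _ (sigma_injective _ _),
    Set.sdiff_singleton_eq_self hout]

lemma invN_comp_sgen_of_nonpos (hC : C.IsFRS) (h : w.toFun (Pi.single i 1) ≤ 0) :
    invN w = invN (w.comp (sgen C w.src i)) + 1 := by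
  have hin : Pi.single i 1 ∈ invSet w := (single_mem_invSet_iff w i).2 h
  have hout : Pi.single i 1 ∉ invSet (w.comp (sgen C w.src i)) := fun h' =>
    not_nonpos_of_nonneg (w.map_mem_roots (single_mem_roots _ i))
      ((single_mem_invSet_comp_sgen_iff w i).1 h') h
  rw [invN, invN, ← Set.ncard_sdiff_singleton_add_one hin (invSet_finite hC _),
    ← Set.sdiff_singleton_eq_self hout, invSet_comp_sgen_diff w i hC,
    Set.ncard_image_of_injective _ (sigma_injective _ _)]

end RightMul

section LeftMul

variable (x : Mor C) (j : I)

lemma inv_genMor_comp :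
    ((genMor C j x.tgt).comp x).inv = x.inv.comp (sgen C x.inv.src j) := by
  obtain ⟨m, hm⟩ := x.exists_realizes
  refine Mor.eq_of_realizes (l := m.reverse ++ [j]) ?_
    (realizes_comp rfl (Mor.realizes_inv hm) (realizes_sgen _ _)) ?_
  · simpa using Mor.realizes_inv (realizes_comp rfl (realizes_genMor j x.tgt) hm)
  · rw [comp_src rfl, Mor.inv_src, comp_tgt rfl]; rfl

lemma invN_genMor_comp_of_not_nonpos (hC : C.IsFRS) (h : ¬x.inv.toFun (Pi.single j 1) ≤ 0) :
    invN ((genMor C j x.tgt).comp x) = invN x + 1 := by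
  rw [← invN_inv, inv_genMor_comp, invN_comp_sgen_of_not_nonpos _ _ hC h, invN_inv]

lemma invN_genMor_comp_of_nonpos (hC : C.IsFRS) (h : x.inv.toFun (Pi.single j 1) ≤ 0) :
    invN x = invN ((genMor C j x.tgt).comp x) + 1 := by
  rw [← invN_inv x, ← invN_inv ((genMor C j x.tgt).comp x), inv_genMor_comp,
    ← invN_comp_sgen_of_nonpos _ _ hC h]

lemma invN_genMor_comp_le (hC : C.IsFRS) :
    invN ((genMor C j x.tgt).comp x) ≤ invN x + 1 := by
  by_cases h : x.inv.toFun (Pi.single j 1) ≤ 0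
  · have := invN_genMor_comp_of_nonpos x j hC h; omega
  · exact (invN_genMor_comp_of_not_nonpos x j hC h).le

end LeftMul

lemma invN_le_length_add (hC : C.IsFRS) {w : Mor C} {l v : List I} (h : Realizes w (l ++ v)) :
    invN w ≤ l.length + invN (Mor.ofWord (C := C) w.src v) := by
  induction l generalizing w with
  | nil =>
    rw [List.length_nil, zero_add]
    exact (congrArg invN (Mor.eq_of_realizes h (Mor.realizes_ofWord w.src v) rfl)).le
  | cons t l ih =>
    obtain ⟨x, hx, -, rfl⟩ := exists_eq_genMor_comp h
    have h₁ := ih hx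
    have h₂ := invN_genMor_comp_le x t hC
    rw [List.length_cons, comp_src (u := genMor C t x.tgt) rfl]
    omega

lemma invN_le_length (hC : C.IsFRS) {w : Mor C} {l : List I} (h : Realizes w l) :
    invN w ≤ l.length := by
  have := invN_le_length_add hC (v := []) (by simpa using h)
  rwa [invN_eq_zero_of_realizes_nil (Mor.realizes_ofWord _ _), add_zero] at this

lemma exists_nonpos_of_invN_ne_zero (hC : C.IsFRS) {w : Mor C} (h : invN w ≠ 0) :
    ∃ i, w.toFun (Pi.single i 1) ≤ 0 := by
  by_contra! hall
  obtain ⟨β, hroot, hpos, hneg⟩ := Set.nonempty_of_ncard_ne_zero h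
  have hsimple : ∀ k, 0 ≤ w.toFun (Pi.single k 1) := fun k =>
    hC.nonneg_of_not_nonpos (w.map_mem_roots (single_mem_roots _ k)) (hall k)
  have hβ : 0 ≤ w.toFun β := by
    rw [← w.toAddMonoidHom_apply, apply_eq_sum_single]
    exact Finset.sum_nonneg fun k _ => smul_nonneg (hpos k) (hsimple k)
  exact not_nonpos_of_nonneg (w.map_mem_roots hroot) hβ hneg

end Inversions

section RankTwo

variable {i j : I}

/-- The set counted by `m_{ij}` in axiom (R4). -/
def coneSet (C : CartanScheme I A) (i j : I) (a : A) : Set (I → ℤ) :=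
  C.roots a ∩ {α | ∃ m n : ℕ, α = (m : ℤ) • Pi.single i 1 + (n : ℤ) • Pi.single j 1}

lemma coneSet_comm (i j : I) (a : A) : coneSet C i j a = coneSet C j i a := by
  simp only [coneSet]
  congr 1
  ext α
  exact ⟨fun ⟨m, n, h⟩ => ⟨n, m, h.trans (add_comm _ _)⟩,
    fun ⟨m, n, h⟩ => ⟨n, m, h.trans (add_comm _ _)⟩⟩

lemma coneSet_finite (hC : C.IsFRS) (i j : I) (a : A) : (coneSet C i j a).Finite :=
  (hC.1 a).subset Set.inter_subset_left

lemma mem_coneSet_iff (hij : i ≠ j) {a : A} {α : I → ℤ} :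
    α ∈ coneSet C i j a ↔
      α ∈ C.roots a ∧ 0 ≤ α ∧ ∀ k ∉ ({i, j} : Set I), α k = 0 := by
  constructor
  · rintro ⟨hroot, m, n, rfl⟩
    refine ⟨hroot, fun k => ?_, fun k hk => ?_⟩
    · simp only [Pi.zero_apply, Pi.add_apply, Pi.smul_apply, Pi.single_apply, smul_eq_mul]
      split_ifs <;> positivity
    · simp only [Set.mem_insert_iff, Set.mem_singleton_iff, not_or] at hk
      simp [hk.1, hk.2]
  · rintro ⟨hroot, hpos, hsupp⟩
    refine ⟨hroot, (α i).toNat, (α j).toNat, ?_⟩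
    ext k
    by_cases hki : k = i
    · subst hki; simp [hij, Int.toNat_of_nonneg (hpos k)]
    by_cases hkj : k = j
    · subst hkj; simp [hki, Int.toNat_of_nonneg (hpos k)]
    simp [hki, hkj, hsupp k (by simp [hki, hkj])]

lemma single_mem_coneSet_left (i j : I) (a : A) : (Pi.single i 1 : I → ℤ) ∈ coneSet C i j a :=
  ⟨single_mem_roots a i, 1, 0, by simp⟩

lemma single_mem_coneSet_right (i j : I) (a : A) :
    (Pi.single j 1 : I → ℤ) ∈ coneSet C i j a :=
  ⟨single_mem_roots a j, 0, 1, by simp⟩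

lemma Mor.apply_nonpos_of_mem_coneSet {w : Mor C} {a : A} (hi : w.toFun (Pi.single i 1) ≤ 0)
    (hj : w.toFun (Pi.single j 1) ≤ 0) {α : I → ℤ} (hα : α ∈ coneSet C i j a) :
    w.toFun α ≤ 0 := by
  obtain ⟨-, m, n, rfl⟩ := hα
  rw [w.map_add, w.map_zsmul, w.map_zsmul]
  exact add_nonpos (smul_nonpos_of_nonneg_of_nonpos (by positivity) hi)
    (smul_nonpos_of_nonneg_of_nonpos (by positivity) hj)

lemma sigma_mem_coneSet (hC : C.IsFRS) (hij : i ≠ j) {t : I} (ht : t ∈ ({i, j} : Set I))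
    {b : A} {α : I → ℤ} (hα : α ∈ coneSet C i j b) (hne : α ≠ Pi.single t 1) :
    C.sigma b t α ∈ coneSet C i j (C.ρ t b) := by
  rw [mem_coneSet_iff hij] at hα ⊢
  obtain ⟨hroot, hpos, hsupp⟩ := hα
  refine ⟨(genMor C t b).map_mem_roots hroot, hC.sigma_nonneg hroot hpos hne, fun k hk => ?_⟩
  rw [sigma_apply_of_ne (fun h : k = t => hk (h ▸ ht)), hsupp k hk]

lemma ncard_coneSet_rho (hC : C.IsFRS) (hij : i ≠ j) {t : I} (ht : t ∈ ({i, j} : Set I))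
    (a : A) : (coneSet C i j (C.ρ t a)).ncard = (coneSet C i j a).ncard := by
  have hle : ∀ b : A, (coneSet C i j b \ {Pi.single t 1}).ncard
      ≤ (coneSet C i j (C.ρ t b) \ {Pi.single t 1}).ncard := by
    intro b
    refine Set.ncard_le_ncard_of_injOn (C.sigma b t) (fun α ⟨hα, hne⟩ => ⟨?_, fun h => ?_⟩)
      (sigma_injective b t).injOn (coneSet_finite hC i j _).sdiff
    · exact sigma_mem_coneSet hC hij ht hα hne
    · have h' := congrArg (C.sigma b t) (Set.mem_singleton_iff.1 h)
      rw [sigma_sigma, sigma_single_self] at h'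
      exact not_single_nonpos t (neg_nonneg.1 (h' ▸ ((mem_coneSet_iff hij).1 hα).2.1))
  have hmem : ∀ b : A, Pi.single t 1 ∈ coneSet C i j b := fun b => by
    rcases ht with rfl | rfl
    exacts [single_mem_coneSet_left _ j b, single_mem_coneSet_right i _ b]
  have h1 := hle a
  have h2 := hle (C.ρ t a)
  rw [C.ρ_invol] at h2
  rw [← Set.ncard_sdiff_singleton_add_one (hmem a) (coneSet_finite hC i j a),
    ← Set.ncard_sdiff_singleton_add_one (hmem (C.ρ t a)) (coneSet_finite hC i j _)]
  omega

end RankTwo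

section Alternating

variable {i j : I}

def altLetter (i j : I) (r : ℕ) : I := if Even r then i else j

lemma altLetter_succ (i j : I) (r : ℕ) : altLetter i j (r + 1) = altLetter j i r := by
  by_cases h : Even r <;> simp [altLetter, Nat.even_add_one, h]

lemma altLetter_mem (i j : I) (r : ℕ) : altLetter i j r ∈ ({i, j} : Set I) := by
  unfold altLetter; split_ifs <;> simp

def altWord (i j : I) (r : ℕ) : List I := (List.range r).map (altLetter i j)

lemma altWord_succ (i j : I) (r : ℕ) :
    altWord i j (r + 1) = altWord i j r ++ [altLetter i j r] := by
  simp [altWord, List.range_succ]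

lemma altWord_succ' (i j : I) (r : ℕ) : altWord i j (r + 1) = i :: altWord j i r := by
  rw [altWord, List.range_succ_eq_map, List.map_cons, List.map_map, altWord]
  exact congrArg₂ List.cons (by simp [altLetter])
    (List.map_congr_left fun r _ => altLetter_succ i j r)

lemma length_altWord (i j : I) (r : ℕ) : (altWord i j r).length = r := by simp [altWord]

lemma mem_pair_of_mem_altWord {i j x : I} {r : ℕ} (h : x ∈ altWord i j r) :
    x ∈ ({i, j} : Set I) := by
  obtain ⟨s, -, rfl⟩ := List.mem_map.1 h
  exact altLetter_mem i j s

lemma altWord_append_reverse (i j : I) (n : ℕ) :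
    altWord j i n ++ (altWord i j n).reverse = altWord j i (2 * n) := by
  induction n generalizing i j with
  | zero => rfl
  | succ n ih =>
    rw [altWord_succ' j, altWord_succ' i, List.reverse_cons, List.cons_append, ← List.append_assoc,
      ih, show 2 * (n + 1) = 2 * n + 1 + 1 by ring, altWord_succ', altWord_succ]
    simp [altLetter]

def Mor.ofWordTo (a : A) (l : List I) : Mor C :=
  ⟨C.wordTarget a l.reverse, a, C.wordMap (C.wordTarget a l.reverse) l,
    ⟨l, wordTarget_wordTarget_reverse a l, rfl⟩⟩

lemma Mor.realizes_ofWordTo (a : A) (l : List I) : Realizes (Mor.ofWordTo (C := C) a l) l :=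
  ⟨wordTarget_wordTarget_reverse a l, rfl⟩

end Alternating

section AltMor

variable {i j : I}

lemma wordTarget_altWord_two_mul (i j : I) (a : A) (n : ℕ) :
    C.wordTarget a (altWord i j (2 * n)) = (fun x => C.ρ i (C.ρ j x))^[n] a := by
  induction n with
  | zero => rfl
  | succ n ih =>
    rw [show 2 * (n + 1) = 2 * n + 1 + 1 by ring, altWord_succ', altWord_succ',
      Function.iterate_succ_apply', ← ih]
    rfl

/-- `σ_i σ_j σ_i ⋯` (`r` factors) with target `a`. -/
def altMor (C : CartanScheme I A) (i j : I) (a : A) (r : ℕ) : Mor C :=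
  Mor.ofWordTo a (altWord i j r)

variable (i j) (a : A) (r : ℕ)

lemma realizes_altMor : Realizes (altMor C i j a r) (altWord i j r) := Mor.realizes_ofWordTo _ _

@[simp] lemma altMor_tgt : (altMor C i j a r).tgt = a := rfl

lemma inParabolic_altMor : InParabolic {i, j} (altMor C i j a r) :=
  ⟨_, fun _ hx => mem_pair_of_mem_altWord hx, realizes_altMor i j a r⟩

lemma altMor_succ_src :
    (altMor C i j a (r + 1)).src = C.ρ (altLetter i j r) (altMor C i j a r).src := by
  simp only [altMor, Mor.ofWordTo, altWord_succ, List.reverse_append, List.reverse_singleton,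
    List.singleton_append]
  rfl

lemma altMor_succ : altMor C i j a (r + 1)
    = (altMor C i j a r).comp (sgen C (altMor C i j a r).src (altLetter i j r)) := by
  refine Mor.eq_of_realizes (realizes_altMor i j a (r + 1)) ?_ ?_
  · rw [altWord_succ]
    exact realizes_comp rfl (realizes_altMor i j a r) (realizes_sgen _ _)
  · rw [comp_src rfl, altMor_succ_src]; rfl

lemma ncard_coneSet_altMor_src (hC : C.IsFRS) (hij : i ≠ j) :
    (coneSet C i j (altMor C i j a r).src).ncard = (coneSet C i j a).ncard := by
  induction r with
  | zero => rfl
  | succ r ih => rw [altMor_succ_src, ncard_coneSet_rho hC hij (altLetter_mem i j r), ih]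

lemma altMor_src_eq (hC : C.IsFRS) (hij : i ≠ j) :
    (altMor C i j a (coneSet C i j a).ncard).src
      = (altMor C j i a (coneSet C i j a).ncard).src := by
  set M := (coneSet C i j a).ncard
  have hR4 : C.wordTarget a (altWord j i (2 * M)) = a := by
    rw [wordTarget_altWord_two_mul, show M = (coneSet C j i a).ncard by rw [coneSet_comm]]
    exact hC.2.2.2 a j i hij.symm -- axiom (R4)
  have hback : C.wordTarget (altMor C i j a M).src (altWord j i M) = a := by
    rwa [← altWord_append_reverse, wordTarget_append] at hR4
  rw [← wordTarget_reverse (altMor C i j a M).src (altWord j i M), hback]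
  rfl

end AltMor

section AltInversions

variable {i j : I} (a : A)

lemma altLetter_eq_or (i j : I) (r : ℕ) {k : I} (hk : k ∈ ({i, j} : Set I)) :
    k = altLetter i j r ∨ k = altLetter i j (r + 1) := by
  rcases hk with rfl | rfl <;> by_cases h : Even r <;> simp [altLetter, Nat.even_add_one, h]

lemma comp_sgen_apply_single_nonpos (hC : C.IsFRS) (w : Mor C) (t : I)
    (h : invN w < invN (w.comp (sgen C w.src t))) :
    (w.comp (sgen C w.src t)).toFun (Pi.single t 1) ≤ 0 := by
  by_cases hw : w.toFun (Pi.single t 1) ≤ 0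
  · have := invN_comp_sgen_of_nonpos w t hC hw
    omega
  · rw [comp_sgen_toFun, Function.comp_apply, sigma_single_self, w.map_neg, neg_nonpos]
    exact hC.nonneg_of_not_nonpos (w.map_mem_roots (single_mem_roots _ t)) hw

lemma invSet_altMor_subset (hC : C.IsFRS) (hij : i ≠ j) (r : ℕ) :
    invSet (altMor C i j a r) ⊆ coneSet C i j (altMor C i j a r).src := by
  induction r with
  | zero =>
    rintro α ⟨hroot, hpos, hneg⟩
    exact absurd hneg (not_nonpos_of_nonneg hroot hpos)
  | succ r ih =>
    intro β hβ
    set t := altLetter i j r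
    have ht : t ∈ ({i, j} : Set I) := altLetter_mem i j r
    rw [altMor_succ] at hβ ⊢
    by_cases hβt : β = Pi.single t 1
    · subst hβt
      rcases ht with h | h <;> rw [h]
      exacts [single_mem_coneSet_left _ _ _, single_mem_coneSet_right _ _ _]
    obtain ⟨α, ⟨hα, hαt⟩, rfl⟩ :
        β ∈ C.sigma _ t '' (invSet (altMor C i j a r) \ {Pi.single t 1}) := by
      rw [← invSet_comp_sgen_diff _ _ hC]
      exact ⟨hβ, hβt⟩
    rw [comp_sgen_src]
    exact sigma_mem_coneSet hC hij ht (ih hα) hαt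

/-- Otherwise the last two letters `i`, `j` would both be descents, making all `m_{ij}` roots of
the cone inversions. -/
lemma altMor_apply_not_nonpos (hC : C.IsFRS) (hij : i ≠ j) {r : ℕ}
    (hr : r < (coneSet C i j a).ncard) (hN : invN (altMor C i j a r) = r) :
    ¬(altMor C i j a r).toFun (Pi.single (altLetter i j r) 1) ≤ 0 := by
  intro hlast
  cases r with
  | zero => exact not_single_nonpos _ hlast
  | succ s =>
    have hprev : (altMor C i j a (s + 1)).toFun (Pi.single (altLetter i j s) 1) ≤ 0 := by
      rw [altMor_succ] at hN ⊢
      refine comp_sgen_apply_single_nonpos hC _ _ ?_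
      have := invN_le_length hC (realizes_altMor i j a s)
      rw [length_altWord] at this
      omega
    have hdesc : ∀ k ∈ ({i, j} : Set I),
        (altMor C i j a (s + 1)).toFun (Pi.single k 1) ≤ 0 := by
      intro k hk
      rcases altLetter_eq_or i j s hk with rfl | rfl
      exacts [hprev, hlast]
    have hsub : coneSet C i j (altMor C i j a (s + 1)).src ⊆ invSet (altMor C i j a (s + 1)) :=
      fun α hα => ⟨hα.1, ((mem_coneSet_iff hij).1 hα).2.1, Mor.apply_nonpos_of_mem_coneSet
        (hdesc i (by simp)) (hdesc j (by simp)) hα⟩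
    have := Set.ncard_le_ncard hsub (invSet_finite hC _)
    rw [ncard_coneSet_altMor_src i j a _ hC hij] at this
    change _ ≤ invN _ at this
    omega

lemma invN_altMor (hC : C.IsFRS) (hij : i ≠ j) {r : ℕ} (hr : r ≤ (coneSet C i j a).ncard) :
    invN (altMor C i j a r) = r := by
  induction r with
  | zero => exact invN_eq_zero_of_realizes_nil (realizes_altMor i j a 0)
  | succ r ih =>
    have hN := ih (by omega)
    rw [altMor_succ, invN_comp_sgen_of_not_nonpos _ _ hC
      (altMor_apply_not_nonpos a hC hij (by omega) hN), hN]

lemma invSet_altMor_eq (hC : C.IsFRS) (hij : i ≠ j) :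
    invSet (altMor C i j a (coneSet C i j a).ncard)
      = coneSet C i j (altMor C i j a (coneSet C i j a).ncard).src := by
  refine Set.eq_of_subset_of_ncard_le (invSet_altMor_subset a hC hij _) ?_
    (coneSet_finite hC i j _)
  rw [ncard_coneSet_altMor_src i j a _ hC hij]
  exact (invN_altMor a hC hij le_rfl).ge

end AltInversions

section Determinant

variable {i j : I}

def det2 (i j : I) (f : (I → ℤ) → (I → ℤ)) : ℤ :=
  f (Pi.single i 1) i * f (Pi.single j 1) j - f (Pi.single i 1) j * f (Pi.single j 1) i

lemma det2_comm (i j : I) (f : (I → ℤ) → (I → ℤ)) : det2 i j f = det2 j i f := by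
  unfold det2; ring

lemma sigma_apply_self_of_supp (hij : i ≠ j) (o : A) {v : I → ℤ}
    (hv : ∀ k ∉ ({i, j} : Set I), v k = 0) :
    C.sigma o i v i = -v i - C.c o i j * v j := by
  have hsum : ∑ l, C.c o i l * v l = C.c o i i * v i + C.c o i j * v j :=
    Fintype.sum_eq_add i j hij fun k ⟨hki, hkj⟩ => by simp [hv k (by simp [hki, hkj])]
  simp only [sigma, if_true, hsum, C.c_diag]
  ring

lemma det2_sigma_left_comp (hij : i ≠ j) (o : A) {g : (I → ℤ) → (I → ℤ)}
    (hg : ∀ s ∈ ({i, j} : Set I), ∀ k ∉ ({i, j} : Set I), g (Pi.single s 1) k = 0) :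
    det2 i j (C.sigma o i ∘ g) = -det2 i j g := by
  simp only [det2, Function.comp_apply, sigma_apply_of_ne hij.symm,
    sigma_apply_self_of_supp hij o (hg i (by simp)),
    sigma_apply_self_of_supp hij o (hg j (by simp))]
  ring

lemma det2_sigma_comp (hij : i ≠ j) (o : A) {t : I} (ht : t ∈ ({i, j} : Set I))
    {g : (I → ℤ) → (I → ℤ)}
    (hg : ∀ s ∈ ({i, j} : Set I), ∀ k ∉ ({i, j} : Set I), g (Pi.single s 1) k = 0) :
    det2 i j (C.sigma o t ∘ g) = -det2 i j g := by
  rcases ht with rfl | rfl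
  · exact det2_sigma_left_comp hij o hg
  · have hg' : ∀ s ∈ ({t, i} : Set I), ∀ k ∉ ({t, i} : Set I), g (Pi.single s 1) k = 0 := by
      simpa only [Set.pair_comm] using hg
    rw [det2_comm, det2_sigma_left_comp hij.symm o hg', det2_comm]

lemma det2_wordMap (hij : i ≠ j) (b : A) {l : List I} (hl : ∀ x ∈ l, x ∈ ({i, j} : Set I)) :
    det2 i j (C.wordMap b l) = (-1) ^ l.length := by
  induction l with
  | nil => simp [det2, wordMap, hij, hij.symm]
  | cons t m ih =>
    have hm : ∀ x ∈ m, x ∈ ({i, j} : Set I) := fun x hx => hl x (List.mem_cons_of_mem t hx)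
    have hsupp : ∀ s ∈ ({i, j} : Set I), ∀ k ∉ ({i, j} : Set I),
        C.wordMap b m (Pi.single s 1) k = 0 := fun s hs k hk => by
      rw [wordMap_apply_of_notMem hm b _ hk, Pi.single_apply, if_neg fun h : k = s => hk (h ▸ hs)]
    rw [wordMap, det2_sigma_comp hij _ (hl t List.mem_cons_self) hsupp, ih hm, List.length_cons,
      pow_succ]
    ring

lemma apply_single_eq_self_of_det2 (hij : i ≠ j) {f : (I → ℤ) → (I → ℤ)}
    (hfix : ∀ v, ∀ k ∉ ({i, j} : Set I), f v k = v k)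
    (hperm : ∀ k, ∃ l, f (Pi.single k 1) = Pi.single l 1) (hdet : det2 i j f = 1) (k : I) :
    f (Pi.single k 1) = Pi.single k 1 := by
  have himage : ∀ k, ∃ l, f (Pi.single k 1) = Pi.single l 1 ∧ (l = k ∨ l ∈ ({i, j} : Set I)) := by
    intro k
    obtain ⟨l, hl⟩ := hperm k
    refine ⟨l, hl, or_iff_not_imp_right.2 fun hlij => ?_⟩
    have := hfix (Pi.single k 1) l hlij
    rw [hl] at this
    by_contra hlk
    simp [hlk] at this
  obtain ⟨li, hli, hli'⟩ := himage i
  obtain ⟨lj, hlj, hlj'⟩ := himage j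
  have hi : f (Pi.single i 1) = Pi.single i 1 ∧ f (Pi.single j 1) = Pi.single j 1 := by
    simp only [Set.mem_insert_iff, Set.mem_singleton_iff] at hli' hlj'
    rw [det2, hli, hlj] at hdet
    rcases hli' with rfl | rfl | rfl <;> rcases hlj' with rfl | rfl | rfl <;>
      simp_all [hij.symm]
  by_cases hk : k ∈ ({i, j} : Set I)
  · rcases hk with rfl | rfl
    exacts [hi.1, hi.2]
  · obtain ⟨l, hl, hl'⟩ := himage k
    rcases hl' with rfl | hl'
    · exact hl
    · have := hfix (Pi.single k 1) k hk
      rw [hl] at this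
      have hlk : k ≠ l := fun h => hk (h ▸ hl')
      simp [hlk] at this

end Determinant

section Braid

variable {i j : I}

lemma comp_inv_apply_nonneg (hC : C.IsFRS) {z₁ z₂ : Mor C} (hsrc : z₁.src = z₂.src)
    (hinv : invSet z₁ = invSet z₂) {γ : I → ℤ} (hγ : γ ∈ C.roots z₂.tgt) (hpos : 0 ≤ γ) :
    0 ≤ z₁.toFun (z₂.inv.toFun γ) := by
  set ξ := z₂.inv.toFun γ
  have hξ : ξ ∈ C.roots z₁.src := hsrc ▸ z₂.inv.map_mem_roots hγ
  have hz₂ξ : z₂.toFun ξ = γ := z₂.apply_inv_apply γ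
  rcases hC.nonneg_or_nonpos hξ with hξpos | hξneg
  · refine hC.nonneg_of_not_nonpos (z₁.map_mem_roots hξ) fun hneg => ?_
    have hmem : ξ ∈ invSet z₂ := hinv ▸ ⟨hξ, hξpos, hneg⟩
    exact not_nonpos_of_nonneg hγ hpos (hz₂ξ ▸ hmem.2.2)
  · have hmem : -ξ ∈ invSet z₁ := hinv ▸
      ⟨neg_mem_roots (hsrc ▸ hξ), neg_nonneg.2 hξneg,
        by rw [z₂.map_neg, hz₂ξ, neg_nonpos]; exact hpos⟩
    simpa [z₁.map_neg] using hmem.2.2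

lemma comp_inv_apply_single_eq_single (hC : C.IsFRS) {z₁ z₂ : Mor C} (hsrc : z₁.src = z₂.src)
    (hinv : invSet z₁ = invSet z₂) (k : I) :
    ∃ l, (z₁.comp z₂.inv).toFun (Pi.single k 1) = Pi.single l 1 := by
  have hy : ∀ v, (z₁.comp z₂.inv).toFun v = z₁.toFun (z₂.inv.toFun v) := fun v => by
    rw [comp_toFun (hsrc.symm : z₂.inv.tgt = z₁.src)]; rfl
  have hy' : ∀ v, (z₂.comp z₁.inv).toFun v = z₂.toFun (z₁.inv.toFun v) := fun v => by
    rw [comp_toFun (hsrc : z₁.inv.tgt = z₂.src)]; rfl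
  refine exists_eq_single_of_nonneg (f := (z₁.comp z₂.inv).toAddMonoidHom)
    (g := (z₂.comp z₁.inv).toAddMonoidHom) (fun v => ?_) (fun v => ?_) (fun k => ?_) (fun k => ?_) k
  · simp [hy, hy', Mor.inv_apply_apply, Mor.apply_inv_apply]
  · simp [hy, hy', Mor.inv_apply_apply, Mor.apply_inv_apply]
  · simpa [hy] using comp_inv_apply_nonneg hC hsrc hinv (single_mem_roots _ k) (single_nonneg k)
  · simpa [hy'] using
      comp_inv_apply_nonneg hC hsrc.symm hinv.symm (single_mem_roots _ k) (single_nonneg k)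

lemma Mor.eq_of_comp_inv_apply_single {z₁ z₂ : Mor C} (hsrc : z₁.src = z₂.src)
    (htgt : z₁.tgt = z₂.tgt)
    (h : ∀ k, (z₁.comp z₂.inv).toFun (Pi.single k 1) = Pi.single k 1) : z₁ = z₂ := by
  ext1
  · exact hsrc
  · exact htgt
  · funext v
    have := eq_self_of_apply_single (z₁.comp z₂.inv).toAddMonoidHom h (z₂.toFun v)
    rwa [Mor.toAddMonoidHom_apply, comp_toFun (hsrc.symm : z₂.inv.tgt = z₁.src),
      Function.comp_apply, Mor.inv_apply_apply] at this

/-- `z₁ z₂⁻¹` sends positive roots to positive roots, so it permutes the simple roots; it fixes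
the coordinates outside `{i, j}`, and its `{i, j}`-determinant `1` excludes the swap of `α_i` and
`α_j`. -/
theorem eq_of_invSet_eq (hC : C.IsFRS) (hij : i ≠ j) {z₁ z₂ : Mor C} {l₁ l₂ : List I}
    (h₁ : Realizes z₁ l₁) (h₂ : Realizes z₂ l₂) (hl₁ : ∀ x ∈ l₁, x ∈ ({i, j} : Set I))
    (hl₂ : ∀ x ∈ l₂, x ∈ ({i, j} : Set I)) (hpar : Even (l₁.length + l₂.length))
    (hsrc : z₁.src = z₂.src) (htgt : z₁.tgt = z₂.tgt) (hinv : invSet z₁ = invSet z₂) :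
    z₁ = z₂ := by
  have hreal : Realizes (z₁.comp z₂.inv) (l₁ ++ l₂.reverse) :=
    realizes_comp hsrc.symm h₁ (Mor.realizes_inv h₂)
  have hletters : ∀ x ∈ l₁ ++ l₂.reverse, x ∈ ({i, j} : Set I) := fun x hx => by
    rcases List.mem_append.1 hx with hx | hx
    exacts [hl₁ x hx, hl₂ x (List.mem_reverse.1 hx)]
  have hfix : ∀ v, ∀ k ∉ ({i, j} : Set I), (z₁.comp z₂.inv).toFun v k = v k := fun v k hk =>
    InParabolic.apply_of_notMem ⟨_, hletters, hreal⟩ v hk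
  have hdet : det2 i j (z₁.comp z₂.inv).toFun = 1 := by
    rw [← hreal.2, det2_wordMap hij _ hletters, List.length_append, List.length_reverse]
    exact hpar.neg_one_pow
  exact Mor.eq_of_comp_inv_apply_single hsrc htgt (apply_single_eq_self_of_det2 hij hfix
    (comp_inv_apply_single_eq_single hC hsrc hinv) hdet)

theorem altMor_braid (hC : C.IsFRS) (hij : i ≠ j) (a : A) :
    altMor C i j a (coneSet C i j a).ncard = altMor C j i a (coneSet C i j a).ncard := by
  have hsrc := altMor_src_eq i j a hC hij
  have hM : (coneSet C j i a).ncard = (coneSet C i j a).ncard := by rw [coneSet_comm]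
  refine eq_of_invSet_eq hC hij (realizes_altMor i j a _) (realizes_altMor j i a _)
    (fun _ => mem_pair_of_mem_altWord) (fun x hx => Set.pair_comm j i ▸ mem_pair_of_mem_altWord hx)
    (by simp [length_altWord]) hsrc rfl ?_
  have h₂ := invSet_altMor_eq a hC hij.symm
  rw [hM, coneSet_comm j i] at h₂
  rw [invSet_altMor_eq a hC hij, h₂, hsrc]

end Braid

section Exchange

lemma Realizes.cancel_pair {w : Mor C} {l₁ l₂ : List I} {i : I}
    (h : Realizes w (l₁ ++ [i, i] ++ l₂)) : Realizes w (l₁ ++ l₂) := by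
  have ht : ∀ b, C.wordTarget b [i, i] = b := fun b => C.ρ_invol i b
  have hm : ∀ b, C.wordMap b [i, i] = id := fun b => by
    funext v
    show C.sigma (C.ρ i b) i (C.sigma b i v) = v
    rw [sigma_rho, sigma_sigma]
  obtain ⟨h1, h2⟩ := h
  simp only [List.append_assoc, wordTarget_append, wordMap_append, ht, hm,
    Function.id_comp] at h1 h2
  exact ⟨by rwa [wordTarget_append], by rwa [wordMap_append]⟩

lemma inv_apply_single_nonpos_of_realizes_cons (hC : C.IsFRS) {y : Mor C} {j : I} {m : List I}
    (h : Realizes y (j :: m)) (hlen : m.length + 1 = invN y) :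
    y.inv.toFun (Pi.single j 1) ≤ 0 := by
  obtain ⟨x, hx, -, rfl⟩ := exists_eq_genMor_comp h
  have hxlen := invN_le_length hC hx
  have hxj : ¬x.inv.toFun (Pi.single j 1) ≤ 0 := fun hneg => by
    have := invN_genMor_comp_of_nonpos x j hC hneg
    omega
  rw [inv_genMor_comp, comp_sgen_toFun, Function.comp_apply, Mor.inv_src,
    sigma_single_self, Mor.map_neg, neg_nonpos]
  exact hC.nonneg_of_not_nonpos (x.inv.map_mem_roots (single_mem_roots _ j)) hxj

lemma Realizes.eq_comp_ofWord {y z : Mor C} {l v : List I} (h : Realizes y (l ++ v))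
    (hz : Realizes z l) (htgt : z.tgt = y.tgt) :
    (Mor.ofWord (C := C) y.src v).tgt = z.src ∧ y = z.comp (Mor.ofWord y.src v) := by
  have hc : (Mor.ofWord (C := C) y.src v).tgt = z.src := by
    have := h.1
    rw [wordTarget_append, ← htgt, ← hz.1] at this
    show C.wordTarget y.src v = z.src
    rw [← wordTarget_reverse (C.wordTarget y.src v) l, this, wordTarget_reverse]
  exact ⟨hc, Mor.eq_of_realizes h (realizes_comp hc hz (Mor.realizes_ofWord _ _))
    (by rw [comp_src hc]; rfl)⟩

lemma Mor.inv_apply_of_eq_comp {y z x : Mor C} (hc : x.tgt = z.src) (hy : y = z.comp x)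
    (v : I → ℤ) : x.inv.toFun v = y.inv.toFun (z.toFun v) := by
  subst hy
  apply (z.comp x).toFun_injective
  rw [Mor.apply_inv_apply, comp_toFun hc, Function.comp_apply, Mor.apply_inv_apply]

lemma altMor_apply_mem_coneSet (hC : C.IsFRS) {i j : I} (hij : i ≠ j) (a : A) {r : ℕ}
    (hr : r < (coneSet C i j a).ncard) :
    (altMor C i j a r).toFun (Pi.single (altLetter i j r) 1) ∈ coneSet C i j a := by
  have ht := altLetter_mem i j r
  refine (mem_coneSet_iff hij).2 ⟨(altMor C i j a r).map_mem_roots (single_mem_roots _ _),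
    hC.nonneg_of_not_nonpos ((altMor C i j a r).map_mem_roots (single_mem_roots _ _))
      (altMor_apply_not_nonpos a hC hij hr (invN_altMor a hC hij hr.le)), fun k hk => ?_⟩
  rw [(inParabolic_altMor i j a r).apply_of_notMem _ hk, Pi.single_apply,
    if_neg fun h : k = _ => hk (h ▸ ht)]

def ExchangeBelow (C : CartanScheme I A) (n : ℕ) : Prop :=
  ∀ (y : Mor C) (u : List I) (k : I), invN y < n → Realizes y u → u.length = invN y →
    y.inv.toFun (Pi.single k 1) ≤ 0 → ∃ v, Realizes y (k :: v) ∧ v.length + 1 = invN y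

section Step

variable {y : Mor C} {j k : I}

/-- Writing `y = (σ_j σ_k ⋯) x`, the next alternating letter `t` is a left descent of `x`:
`x⁻¹(α_t) = y⁻¹(σ_j σ_k ⋯ (α_t))`, a root of the `{j, k}`-cone mapped by `y⁻¹` to a negative one. -/
lemma exists_realizes_altWord_succ (hC : C.IsFRS) (hjk : j ≠ k) (hIH : ExchangeBelow C (invN y))
    (hdj : y.inv.toFun (Pi.single j 1) ≤ 0) (hdk : y.inv.toFun (Pi.single k 1) ≤ 0) {r : ℕ}
    (hr₁ : 1 ≤ r) (hr : r < (coneSet C j k y.tgt).ncard)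
    (h : ∃ v, Realizes y (altWord j k r ++ v) ∧ r + v.length = invN y) :
    ∃ v, Realizes y (altWord j k (r + 1) ++ v) ∧ r + 1 + v.length = invN y := by
  obtain ⟨v, hv, hlen⟩ := h
  have hx : invN (Mor.ofWord (C := C) y.src v) = v.length := by
    have h₁ := invN_le_length hC (Mor.realizes_ofWord (C := C) y.src v)
    have h₂ := invN_le_length_add hC hv
    rw [length_altWord] at h₂
    omega
  obtain ⟨hc, hy⟩ := hv.eq_comp_ofWord (realizes_altMor j k y.tgt r) rfl
  have hdt : (Mor.ofWord (C := C) y.src v).inv.toFun (Pi.single (altLetter j k r) 1) ≤ 0 := by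
    rw [Mor.inv_apply_of_eq_comp hc hy]
    exact y.inv.apply_nonpos_of_mem_coneSet hdj hdk (altMor_apply_mem_coneSet hC hjk y.tgt hr)
  obtain ⟨v', hv', hlen'⟩ := hIH _ v _ (by omega) (Mor.realizes_ofWord _ _) hx.symm hdt
  refine ⟨v', ?_, by omega⟩
  rw [altWord_succ, List.append_assoc, List.singleton_append, hy]
  exact realizes_comp hc (realizes_altMor j k y.tgt r) hv'

lemma exists_realizes_altWord (hC : C.IsFRS) (hjk : j ≠ k) (hIH : ExchangeBelow C (invN y))
    {m : List I} (hm : Realizes y (j :: m)) (hlen : m.length + 1 = invN y)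
    (hdk : y.inv.toFun (Pi.single k 1) ≤ 0) {r : ℕ} (hr₁ : 1 ≤ r)
    (hr : r ≤ (coneSet C j k y.tgt).ncard) :
    ∃ v, Realizes y (altWord j k r ++ v) ∧ r + v.length = invN y := by
  induction r, hr₁ using Nat.le_induction with
  | base => exact ⟨m, hm, by omega⟩
  | succ r hr₁ ih =>
    exact exists_realizes_altWord_succ hC hjk hIH
      (inv_apply_single_nonpos_of_realizes_cons hC hm hlen) hdk hr₁ (by omega) (ih (by omega))

lemma exchange_step (hC : C.IsFRS) (hIH : ExchangeBelow C (invN y)) {u : List I}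
    (hu : Realizes y u) (hlen : u.length = invN y) (hk : y.inv.toFun (Pi.single k 1) ≤ 0) :
    ∃ v, Realizes y (k :: v) ∧ v.length + 1 = invN y := by
  cases u with
  | nil =>
    rw [← (Mor.realizes_inv hu).2] at hk
    exact absurd hk (not_single_nonpos k)
  | cons j m =>
    by_cases hjk : j = k
    · exact ⟨m, hjk ▸ hu, hlen⟩
    set M := (coneSet C j k y.tgt).ncard
    have hM : 0 < M := (Set.ncard_pos (coneSet_finite hC j k _)).2
      ⟨_, single_mem_coneSet_left j k _⟩
    obtain ⟨v, hv, hvlen⟩ := exists_realizes_altWord hC hjk hIH hu hlen hk hM le_rfl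
    obtain ⟨hc, hy⟩ := hv.eq_comp_ofWord (realizes_altMor j k y.tgt M) rfl
    rw [altMor_braid hC hjk] at hc hy
    have hreal := realizes_comp hc (realizes_altMor k j y.tgt M) (Mor.realizes_ofWord _ v)
    rw [← hy, show M = M - 1 + 1 by omega, altWord_succ', List.cons_append] at hreal
    exact ⟨_, hreal, by simp [length_altWord]; omega⟩

end Step

theorem exists_realizes_cons (hC : C.IsFRS) {y : Mor C} {u : List I} {k : I} (hu : Realizes y u)
    (hlen : u.length = invN y) (hk : y.inv.toFun (Pi.single k 1) ≤ 0) :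
    ∃ v, Realizes y (k :: v) ∧ v.length + 1 = invN y := by
  have hall : ∀ n, ExchangeBelow C n := by
    intro n
    induction n with
    | zero => intro _ _ _ h; omega
    | succ n ih =>
      intro y u k hy hu hlen hk
      rcases Nat.lt_succ_iff_lt_or_eq.1 hy with hy | hy
      · exact ih y u k hy hu hlen hk
      · exact exchange_step hC (hy ▸ ih) hu hlen hk
  exact hall _ y u k (Nat.lt_succ_self _) hu hlen hk

lemma exists_realizes_length_eq_invN (hC : C.IsFRS) (w : Mor C) :
    ∃ l, Realizes w l ∧ l.length = invN w := by
  obtain ⟨l, hl⟩ := w.exists_realizes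
  induction l generalizing w with
  | nil => exact ⟨[], hl, (invN_eq_zero_of_realizes_nil hl).symm⟩
  | cons j m ih =>
    obtain ⟨x, hx, -, rfl⟩ := exists_eq_genMor_comp hl
    obtain ⟨l₂, hl₂, hlen₂⟩ := ih x hx
    by_cases hxj : x.inv.toFun (Pi.single j 1) ≤ 0
    · have hN := invN_genMor_comp_of_nonpos x j hC hxj
      obtain ⟨v, hv, hvlen⟩ := exists_realizes_cons hC hl₂ hlen₂ hxj
      have hreal := realizes_comp rfl (realizes_genMor j x.tgt) hv
      exact ⟨v, Realizes.cancel_pair (l₁ := []) (i := j) (by simpa using hreal), by omega⟩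
    · have hN := invN_genMor_comp_of_not_nonpos x j hC hxj
      exact ⟨j :: l₂, realizes_comp rfl (realizes_genMor j x.tgt) hl₂,
        by simp [hN, hlen₂]⟩

lemma realizes_nil_of_invN_eq_zero (hC : C.IsFRS) {w : Mor C} (h : invN w = 0) :
    Realizes w [] := by
  obtain ⟨l, hl, hlen⟩ := exists_realizes_length_eq_invN hC w
  rw [h, List.length_eq_zero_iff] at hlen
  rwa [hlen] at hl

end Exchange

section Cosets

lemma comp_sgen_comp_sgen (w : Mor C) (i : I) :
    (w.comp (sgen C w.src i)).comp (sgen C (w.comp (sgen C w.src i)).src i) = w := by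
  obtain ⟨l, hl⟩ := w.exists_realizes
  have h := realizes_comp rfl (realizes_comp rfl hl (realizes_sgen w.src i)) (realizes_sgen _ i)
  have h' : Realizes _ (l ++ []) := Realizes.cancel_pair (by simpa using h)
  refine Mor.eq_of_realizes (by simpa using h') hl ?_
  rw [comp_sgen_src, comp_sgen_src, C.ρ_invol]

/-- A right descent `σ_i` of an element `p` of `W_J(C)` has `i ∈ J`, since otherwise the `i`-th
coordinate of `p(α_i)` would still be `1`. -/
theorem InParabolic.inter (hC : C.IsFRS) {J K : Set I} {p : Mor C} (hJ : InParabolic J p)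
    (hK : InParabolic K p) : InParabolic (J ∩ K) p := by
  induction h : invN p using Nat.strong_induction_on generalizing p with
  | _ n ih =>
  by_cases h0 : invN p = 0
  · exact ⟨[], fun _ h => absurd h List.not_mem_nil, realizes_nil_of_invN_eq_zero hC h0⟩
  obtain ⟨i, hi⟩ := exists_nonpos_of_invN_ne_zero hC h0
  have hmem : ∀ {L : Set I}, InParabolic L p → i ∈ L := fun hL => by
    by_contra hiL
    have := hi i
    rw [Pi.zero_apply, hL.apply_of_notMem _ hiL] at this
    simp at this
  have hsgen : ∀ {L : Set I} (b : A), i ∈ L → InParabolic L (sgen C b i) := fun b hiL =>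
    ⟨[i], by simpa using hiL, realizes_sgen b i⟩
  have hN := invN_comp_sgen_of_nonpos p i hC hi
  have h' := ih _ (by omega) (hJ.comp rfl (hsgen p.src (hmem hJ)))
    (hK.comp rfl (hsgen p.src (hmem hK))) rfl
  rw [← comp_sgen_comp_sgen p i]
  exact h'.comp rfl (hsgen (L := J ∩ K) _ ⟨hmem hJ, hmem hK⟩)

lemma comp_left_cancel {z p q : Mor C} (hp : p.tgt = z.src) (hq : q.tgt = z.src)
    (h : z.comp p = z.comp q) : p = q := by
  ext1
  · rw [← comp_src hp, h, comp_src hq]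
  · rw [hp, hq]
  · funext v
    apply z.toFun_injective
    have := congrFun (congrArg Mor.toFun h) v
    rwa [comp_toFun hp, comp_toFun hq] at this

lemma leftCoset_eq_of_mem {u z : Mor C} {J : Set I} (hz : z ∈ leftCoset u J) :
    leftCoset z J = leftCoset u J := by
  obtain ⟨p, hp, hpt, rfl⟩ := hz
  ext x
  constructor
  · rintro ⟨q, hq, hqt, rfl⟩
    rw [comp_src hpt] at hqt
    exact ⟨p.comp q, hp.comp hqt hq, by rw [comp_tgt hqt, hpt], comp_assoc hpt hqt⟩
  · rintro ⟨r, hr, hrt, rfl⟩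
    have hc : r.tgt = p.inv.src := hrt.trans hpt.symm
    refine ⟨p.inv.comp r, hp.inv.comp hc hr, by rw [comp_tgt hc, comp_src hpt]; rfl, ?_⟩
    rw [comp_assoc hpt (by rw [comp_tgt hc]; rfl), comp_inv_comp hc]

lemma leftCoset_inter_leftCoset (hC : C.IsFRS) (z : Mor C) (J K : Set I) :
    leftCoset z J ∩ leftCoset z K = leftCoset z (J ∩ K) := by
  ext x
  constructor
  · rintro ⟨⟨p, hp, hpt, rfl⟩, ⟨q, hq, hqt, hx⟩⟩
    obtain rfl := comp_left_cancel hpt hqt hx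
    exact ⟨p, hp.inter hC hq, hpt, rfl⟩
  · rintro ⟨p, hp, hpt, rfl⟩
    exact ⟨⟨p, hp.mono Set.inter_subset_left, hpt, rfl⟩,
      ⟨p, hp.mono Set.inter_subset_right, hpt, rfl⟩⟩

end Cosets

end CartanScheme

variable {I A : Type} [Fintype I] [DecidableEq I] [Fintype A] [Nonempty A] [DecidableEq A]

open CartanScheme

theorem coset_intersection_general (C : CartanScheme I A) (hC : C.IsFRS) (a : A)
    (J K : Set I) (u v : Mor C) (hu : u.tgt = a)
    (hne : (leftCoset u J ∩ leftCoset v K).Nonempty) :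
    (∃ w : Mor C, w.tgt = a ∧
      leftCoset u J ∩ leftCoset v K = leftCoset w (J ∩ K)) ∧
    (J ⊆ K → leftCoset u J ∩ leftCoset v K = leftCoset u J) ∧
    (J = K → leftCoset u J = leftCoset v K) := by
  obtain ⟨z, hzu, hzv⟩ := hne
  have hz : z.tgt = a := by
    obtain ⟨p, -, hp, rfl⟩ := hzu
    rw [comp_tgt hp, hu]
  rw [← leftCoset_eq_of_mem hzu, ← leftCoset_eq_of_mem hzv, leftCoset_inter_leftCoset hC]
  exact ⟨⟨z, hz, rfl⟩, fun hJK => by rw [Set.inter_eq_left.2 hJK], fun hJK => by rw [hJK]⟩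

/-- If `u W_J(C) ∩ v W_K(C) ≠ ∅` then it equals `w W_{J∩K}(C)` for some
`w ∈ Hom(-,a)`; in particular if `J ⊆ K` then it equals `u W_J(C)`, and if `J = K` then
`u W_J(C) = v W_J(C)`. -/
theorem coset_intersection (C : CartanScheme I A) (hC : C.IsFRS) (a : A)
    (J K : Set I) (u v : Mor C) (hu : u.tgt = a) (hv : v.tgt = a)
    (hne : (leftCoset u J ∩ leftCoset v K).Nonempty) :
    (∃ w : Mor C, w.tgt = a ∧
      leftCoset u J ∩ leftCoset v K = leftCoset w (J ∩ K)) ∧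
    (J ⊆ K → leftCoset u J ∩ leftCoset v K = leftCoset u J) ∧
    (J = K → leftCoset u J = leftCoset v K) :=
  coset_intersection_general C hC a J K u v hu hne
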